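/- arXiv:hep-th/0602126 — 3 statements merged into one kernel-verified Lean document; each statement's English description precedes it below -/
import Mathlib

section
/- Let H be a connected graded commutative Hopf algebra over ℚ (or a field of characteristic 0) and let K be a commutative algebra equipped with a direct sum decomposition K = K₋ ⊕ K₊ into subalgebras, with projection T : K → K₋ along K₊. For any algebra homomorphism φ : H → K, define φ₋ : H → K recursively on the augmentation ideal by φ₋(X) = -T(φ(X) + Σ φ₋(X')φ(X'')) where Δ'(X) = Σ X'⊗X'', and φ₋(1) = 1. Then φ₋ is well-defined by induction on the degree, and φ₊ := φ₋ * φ satisfies φ₊(X) = φ(X) + φ₋(X) + Σ φ₋(X')φ(X'') for all X in the augmentation ideal. -/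
open TensorProduct

/-- The image of `p ⊗ q` inside `H ⊗ H`, for submodules `p q : Submodule k H`. -/
noncomputable def subTmul {k H : Type*} [CommRing k] [AddCommGroup H] [Module k H]
    (p q : Submodule k H) : Submodule k (H ⊗[k] H) :=
  LinearMap.range (TensorProduct.mapIncl p q)

/-- Convolution product of linear maps from a coalgebra to an algebra. -/
noncomputable def conv {k H A : Type*} [CommRing k] [AddCommGroup H] [Module k H]
    [Coalgebra k H] [Ring A] [Algebra k A] (f g : H →ₗ[k] A) : H →ₗ[k] A :=
  LinearMap.mul' k A ∘ₗ TensorProduct.map f g ∘ₗ Coalgebra.comul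

namespace BirkhoffAux

variable {k H K : Type*} [Field k] [CommRing H] [HopfAlgebra k H]
  [CommRing K] [Algebra k K]

/-- The reduced comultiplication `Δ' x = Δ x - x ⊗ 1 - 1 ⊗ x` as a linear map. -/
noncomputable def Dmap (k H : Type*) [Field k] [CommRing H] [HopfAlgebra k H] :
    H →ₗ[k] H ⊗[k] H :=
  Coalgebra.comul - (TensorProduct.mk k H H).flip 1 - TensorProduct.mk k H H 1

lemma Dmap_apply (x : H) :
    Dmap k H x = Coalgebra.comul (R := k) x - x ⊗ₜ[k] (1 : H) - (1 : H) ⊗ₜ[k] x := rfl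

/-- Glue a family of maps on graded pieces to a map on `H`. -/
noncomputable def glue (ℬ : ℕ → Submodule k H) (hint : DirectSum.IsInternal ℬ)
    (f : ∀ n, ℬ n →ₗ[k] K) : H →ₗ[k] K :=
  DirectSum.toModule k ℕ K f ∘ₗ
    (LinearEquiv.ofBijective (DirectSum.coeLinearMap ℬ) hint).symm.toLinearMap

lemma glue_apply (ℬ : ℕ → Submodule k H) (hint : DirectSum.IsInternal ℬ)
    (f : ∀ n, ℬ n →ₗ[k] K) (n : ℕ) (x : ℬ n) :
    glue ℬ hint f (x : H) = f n x := by
  have h : (LinearEquiv.ofBijective (DirectSum.coeLinearMap ℬ) hint).symm (x : H)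
      = DirectSum.lof k ℕ (fun n => ℬ n) n x := by
    apply (LinearEquiv.ofBijective (DirectSum.coeLinearMap ℬ) hint).injective
    rw [LinearEquiv.apply_symm_apply]
    show (x : H) = DirectSum.coeLinearMap ℬ _
    rw [DirectSum.lof_eq_of, DirectSum.coeLinearMap_of]
  simp only [glue, LinearMap.comp_apply, LinearEquiv.coe_coe, h, DirectSum.toModule_lof]

lemma subTmul_le_ker {W : Type*} [AddCommGroup W] [Module k W]
    {P Q : Submodule k H} (g : H ⊗[k] H →ₗ[k] W)
    (h : ∀ u ∈ P, ∀ v ∈ Q, g (u ⊗ₜ[k] v) = 0) : subTmul P Q ≤ LinearMap.ker g := by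
  rintro z ⟨t, rfl⟩
  induction t using TensorProduct.induction_on with
  | zero => simp
  | tmul u v =>
      simp only [LinearMap.mem_ker, TensorProduct.mapIncl, TensorProduct.map_tmul,
        Submodule.coe_subtype]
      exact h u u.2 v v.2
  | add a b ha hb =>
      rw [LinearMap.mem_ker] at ha hb ⊢
      rw [map_add, map_add, ha, hb, add_zero]

lemma mem_subTmul_left {ℬ0 N : Submodule k H} (hconn : ℬ0 = Submodule.span k {(1 : H)})
    {z : H ⊗[k] H} (hz : z ∈ subTmul ℬ0 N) : ∃ a ∈ N, z = (1 : H) ⊗ₜ[k] a := by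
  obtain ⟨t, rfl⟩ := hz
  induction t using TensorProduct.induction_on with
  | zero => exact ⟨0, N.zero_mem, by simp⟩
  | tmul u v =>
      have hu : (u : H) ∈ Submodule.span k {(1 : H)} := by rw [← hconn]; exact u.2
      obtain ⟨c, hc⟩ := Submodule.mem_span_singleton.mp hu
      refine ⟨c • (v : H), N.smul_mem _ v.2, ?_⟩
      simp only [TensorProduct.mapIncl, TensorProduct.map_tmul, Submodule.coe_subtype]
      rw [← hc, TensorProduct.smul_tmul]
  | add a b ha hb =>
      obtain ⟨a1, ha1, heqa⟩ := ha
      obtain ⟨b1, hb1, heqb⟩ := hb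
      exact ⟨a1 + b1, N.add_mem ha1 hb1,
        by rw [map_add, heqa, heqb, TensorProduct.tmul_add]⟩

lemma mem_subTmul_right {ℬ0 N : Submodule k H} (hconn : ℬ0 = Submodule.span k {(1 : H)})
    {z : H ⊗[k] H} (hz : z ∈ subTmul N ℬ0) : ∃ b ∈ N, z = b ⊗ₜ[k] (1 : H) := by
  obtain ⟨t, rfl⟩ := hz
  induction t using TensorProduct.induction_on with
  | zero => exact ⟨0, N.zero_mem, by simp⟩
  | tmul v u =>
      have hu : (u : H) ∈ Submodule.span k {(1 : H)} := by rw [← hconn]; exact u.2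
      obtain ⟨c, hc⟩ := Submodule.mem_span_singleton.mp hu
      refine ⟨c • (v : H), N.smul_mem _ v.2, ?_⟩
      simp only [TensorProduct.mapIncl, TensorProduct.map_tmul, Submodule.coe_subtype]
      rw [← hc, TensorProduct.tmul_smul, TensorProduct.smul_tmul']
  | add a b ha hb =>
      obtain ⟨a1, ha1, heqa⟩ := ha
      obtain ⟨b1, hb1, heqb⟩ := hb
      exact ⟨a1 + b1, N.add_mem ha1 hb1,
        by rw [map_add, heqa, heqb, TensorProduct.add_tmul]⟩

/-- `(ε ⊗ id)` followed by `lid`. -/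
noncomputable def Emap (k H : Type*) [Field k] [CommRing H] [HopfAlgebra k H] :
    H ⊗[k] H →ₗ[k] H :=
  (TensorProduct.lid k H).toLinearMap ∘ₗ
    LinearMap.rTensor H (Coalgebra.counit (R := k) (A := H))

/-- `(id ⊗ ε)` followed by `rid`. -/
noncomputable def E'map (k H : Type*) [Field k] [CommRing H] [HopfAlgebra k H] :
    H ⊗[k] H →ₗ[k] H :=
  (TensorProduct.rid k H).toLinearMap ∘ₗ
    LinearMap.lTensor H (Coalgebra.counit (R := k) (A := H))

@[simp] lemma Emap_tmul (u v : H) :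
    Emap k H (u ⊗ₜ[k] v) = Coalgebra.counit (R := k) u • v := by
  simp [Emap, TensorProduct.lid_tmul]

@[simp] lemma E'map_tmul (u v : H) :
    E'map k H (u ⊗ₜ[k] v) = Coalgebra.counit (R := k) v • u := by
  simp [E'map, TensorProduct.rid_tmul]

@[simp] lemma Emap_comul (x : H) : Emap k H (Coalgebra.comul (R := k) x) = x := by
  simp [Emap, Coalgebra.rTensor_counit_comul]

@[simp] lemma E'map_comul (x : H) : E'map k H (Coalgebra.comul (R := k) x) = x := by
  simp [E'map, Coalgebra.lTensor_counit_comul]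

/-- The strictly inner part of degree `n`. -/
noncomputable def innerPart (ℬ : ℕ → Submodule k H) (n : ℕ) : Submodule k (H ⊗[k] H) :=
  ⨆ p : {p : ℕ × ℕ // p.1 + p.2 = n ∧ 1 ≤ p.1 ∧ 1 ≤ p.2}, subTmul (ℬ p.1.1) (ℬ p.1.2)

lemma key (ℬ : ℕ → Submodule k H) (hint : DirectSum.IsInternal ℬ)
    (hconn : ℬ 0 = Submodule.span k {(1 : H)})
    (hgraded : ∀ n, ∀ x ∈ ℬ n, (Coalgebra.comul (R := k) x : H ⊗[k] H) ∈
      ⨆ p : {p : ℕ × ℕ // p.1 + p.2 = n}, subTmul (ℬ p.1.1) (ℬ p.1.2)) :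
    ∀ n, 1 ≤ n → ∀ x ∈ ℬ n,
      Coalgebra.counit (R := k) x = 0 ∧ Dmap k H x ∈ innerPart ℬ n := by
  intro n
  induction n using Nat.strong_induction_on with
  | _ n IH =>
  intro hn x hx
  have hsup : (⨆ p : {p : ℕ × ℕ // p.1 + p.2 = n}, subTmul (ℬ p.1.1) (ℬ p.1.2)) ≤
      subTmul (ℬ 0) (ℬ n) ⊔ (innerPart ℬ n ⊔ subTmul (ℬ n) (ℬ 0)) := by
    refine iSup_le fun p => ?_
    obtain ⟨⟨p1, p2⟩, hp⟩ := p
    simp only at hp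
    rcases Nat.eq_zero_or_pos p1 with h1 | h1
    · have h2 : p2 = n := by omega
      subst h1; subst h2
      exact le_sup_left
    rcases Nat.eq_zero_or_pos p2 with h2 | h2
    · have h1' : p1 = n := by omega
      subst h2; subst h1'
      exact le_trans le_sup_right le_sup_right
    · exact le_trans
        (le_iSup (fun p : {p : ℕ × ℕ // p.1 + p.2 = n ∧ 1 ≤ p.1 ∧ 1 ≤ p.2} =>
          subTmul (ℬ p.1.1) (ℬ p.1.2)) ⟨(p1, p2), hp, h1, h2⟩)
        (le_trans le_sup_left le_sup_right)
  have hmem := hsup (hgraded n x hx)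
  rw [Submodule.mem_sup] at hmem
  obtain ⟨l, hl, w, hw, hlw⟩ := hmem
  rw [Submodule.mem_sup] at hw
  obtain ⟨m, hm, r, hr, rfl⟩ := hw
  obtain ⟨a, ha, rfl⟩ := mem_subTmul_left hconn hl
  obtain ⟨b, hb, rfl⟩ := mem_subTmul_right hconn hr
  -- E kills the inner part (first factors have positive degree < n)
  have hMker : innerPart ℬ n ≤ LinearMap.ker (Emap k H) := by
    refine iSup_le fun p => subTmul_le_ker _ fun u hu v hv => ?_
    obtain ⟨⟨p1, p2⟩, hp, h1, h2⟩ := p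
    have hu0 : Coalgebra.counit (R := k) u = 0 :=
      (IH p1 (by simp only at hp h1 h2 ⊢; omega) (by simpa using h1) u hu).1
    rw [Emap_tmul, hu0, zero_smul]
  have hM'ker : innerPart ℬ n ≤ LinearMap.ker (E'map k H) := by
    refine iSup_le fun p => subTmul_le_ker _ fun u hu v hv => ?_
    obtain ⟨⟨p1, p2⟩, hp, h1, h2⟩ := p
    have hv0 : Coalgebra.counit (R := k) v = 0 :=
      (IH p2 (by simp only at hp h1 h2 ⊢; omega) (by simpa using h2) v hv).1
    rw [E'map_tmul, hv0, zero_smul]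
  have hEeq : Coalgebra.counit (R := k) (1 : H) • a +
      (0 + Coalgebra.counit (R := k) b • (1 : H)) = x := by
    have h := congrArg (Emap k H) hlw
    rwa [map_add, map_add, Emap_comul, Emap_tmul, Emap_tmul,
      LinearMap.mem_ker.mp (hMker hm)] at h
  have hE'eq : Coalgebra.counit (R := k) a • (1 : H) +
      (0 + Coalgebra.counit (R := k) (1 : H) • b) = x := by
    have h := congrArg (E'map k H) hlw
    rwa [map_add, map_add, E'map_comul, E'map_tmul, E'map_tmul,
      LinearMap.mem_ker.mp (hM'ker hm)] at h
  rw [Bialgebra.counit_one, one_smul, zero_add] at hEeq hE'eq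
  -- disjointness of degree 0 and degree n
  have hdisj : Disjoint (ℬ 0) (ℬ n) := by
    refine (hint.submodule_iSupIndep 0).mono_right ?_
    exact le_iSup₂ (f := fun j (_ : j ≠ 0) => ℬ j) n (by omega)
  have hmem0 : ∀ c : k, c • (1 : H) ∈ ℬ 0 := fun c => by
    rw [hconn]; exact Submodule.smul_mem _ _ (Submodule.mem_span_singleton_self 1)
  -- from hEeq : a + ε b • 1 = x
  have hzb : Coalgebra.counit (R := k) b • (1 : H) = 0 := by
    refine Submodule.disjoint_def.mp hdisj _ (hmem0 _) ?_
    have : Coalgebra.counit (R := k) b • (1 : H) = x - a := by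
      rw [← hEeq]; abel
    rw [this]; exact sub_mem hx ha
  have hza : Coalgebra.counit (R := k) a • (1 : H) = 0 := by
    refine Submodule.disjoint_def.mp hdisj _ (hmem0 _) ?_
    have : Coalgebra.counit (R := k) a • (1 : H) = x - b := by
      rw [← hE'eq]; abel
    rw [this]; exact sub_mem hx hb
  have hax : a = x := by rw [← hEeq, hzb, add_zero]
  have hbx : b = x := by rw [← hE'eq, hza, zero_add]
  have hεa : Coalgebra.counit (R := k) a = 0 := by
    have h := congrArg (Coalgebra.counit (R := k) (A := H)) hza
    rwa [map_smul, Bialgebra.counit_one, smul_eq_mul, mul_one, map_zero] at h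
  constructor
  · rw [← hax]; exact hεa
  · have hDm : Dmap k H x = m := by
      rw [Dmap_apply, ← hlw, hax, hbx]; abel
    rw [hDm]; exact hm

/-- The negative part, constructed degree by degree. -/
noncomputable def fRec (ℬ : ℕ → Submodule k H) (hint : DirectSum.IsInternal ℬ)
    (T : K →ₗ[k] K) (φ : H →ₐ[k] K) : (n : ℕ) → (ℬ n →ₗ[k] K)
  | 0 => φ.toLinearMap ∘ₗ (ℬ 0).subtype
  | (n+1) =>
      (-(T ∘ₗ (φ.toLinearMap + LinearMap.mul' k K ∘ₗ
        TensorProduct.map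
          (glue ℬ hint (fun m => if h : m < n + 1 then fRec ℬ hint T φ m else 0))
          φ.toLinearMap ∘ₗ Dmap k H))) ∘ₗ (ℬ (n+1)).subtype
  termination_by n => n
  decreasing_by exact h

noncomputable def phim (ℬ : ℕ → Submodule k H) (hint : DirectSum.IsInternal ℬ)
    (T : K →ₗ[k] K) (φ : H →ₐ[k] K) : H →ₗ[k] K :=
  glue ℬ hint (fRec ℬ hint T φ)

lemma phim_piece (ℬ : ℕ → Submodule k H) (hint : DirectSum.IsInternal ℬ)
    (T : K →ₗ[k] K) (φ : H →ₐ[k] K) (n : ℕ) (x : ℬ n) :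
    phim ℬ hint T φ (x : H) = fRec ℬ hint T φ n x :=
  glue_apply ℬ hint _ n x

lemma phim_rec (ℬ : ℕ → Submodule k H) (hint : DirectSum.IsInternal ℬ)
    (hconn : ℬ 0 = Submodule.span k {(1 : H)})
    (hgraded : ∀ n, ∀ x ∈ ℬ n, (Coalgebra.comul (R := k) x : H ⊗[k] H) ∈
      ⨆ p : {p : ℕ × ℕ // p.1 + p.2 = n}, subTmul (ℬ p.1.1) (ℬ p.1.2))
    (T : K →ₗ[k] K) (φ : H →ₐ[k] K) :
    ∀ n, 1 ≤ n → ∀ x ∈ ℬ n,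
      phim ℬ hint T φ x = -(T (φ x + LinearMap.mul' k K
        (TensorProduct.map (phim ℬ hint T φ) φ.toLinearMap (Dmap k H x)))) := by
  intro n hn x hx
  obtain ⟨m, rfl⟩ : ∃ m, n = m + 1 := ⟨n - 1, by omega⟩
  have h1 := phim_piece ℬ hint T φ (m+1) ⟨x, hx⟩
  rw [fRec] at h1
  simp only [LinearMap.comp_apply, LinearMap.neg_apply, LinearMap.add_apply,
    Submodule.coe_subtype, AlgHom.toLinearMap_apply] at h1
  have hD := (key ℬ hint hconn hgraded (m+1) (by omega) x hx).2
  set prev : ∀ j, ℬ j →ₗ[k] K :=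
    (fun j => if h : j < m + 1 then fRec ℬ hint T φ j else 0) with hprev
  have hker : innerPart ℬ (m+1) ≤ LinearMap.ker
      (TensorProduct.map (glue ℬ hint prev) φ.toLinearMap -
        TensorProduct.map (phim ℬ hint T φ) φ.toLinearMap) := by
    refine iSup_le fun p => subTmul_le_ker _ fun u hu v hv => ?_
    obtain ⟨⟨p1, p2⟩, hp, hp1, hp2⟩ := p
    have hlt : p1 < m + 1 := by simp only at hp hp1 hp2; omega
    have hgu : glue ℬ hint prev u = phim ℬ hint T φ u := by
      have e1 := glue_apply ℬ hint prev p1 ⟨u, hu⟩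
      have e2 := phim_piece ℬ hint T φ p1 ⟨u, hu⟩
      rw [e1, e2, hprev]
      simp only [dif_pos hlt]
    simp only [LinearMap.sub_apply, TensorProduct.map_tmul, hgu, sub_self]
  have heq : TensorProduct.map (glue ℬ hint prev) φ.toLinearMap (Dmap k H x) =
      TensorProduct.map (phim ℬ hint T φ) φ.toLinearMap (Dmap k H x) := by
    have h0 := LinearMap.mem_ker.mp (hker hD)
    rw [LinearMap.sub_apply, sub_eq_zero] at h0
    exact h0
  rw [h1, heq]

lemma phim_one (ℬ : ℕ → Submodule k H) (hint : DirectSum.IsInternal ℬ)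
    (hconn : ℬ 0 = Submodule.span k {(1 : H)})
    (T : K →ₗ[k] K) (φ : H →ₐ[k] K) : phim ℬ hint T φ 1 = 1 := by
  have h1 : (1 : H) ∈ ℬ 0 := by rw [hconn]; exact Submodule.mem_span_singleton_self 1
  have h := phim_piece ℬ hint T φ 0 ⟨1, h1⟩
  rw [fRec] at h
  simpa using h

lemma ker_counit_le (ℬ : ℕ → Submodule k H) (hint : DirectSum.IsInternal ℬ)
    (hconn : ℬ 0 = Submodule.span k {(1 : H)})
    (hgraded : ∀ n, ∀ x ∈ ℬ n, (Coalgebra.comul (R := k) x : H ⊗[k] H) ∈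
      ⨆ p : {p : ℕ × ℕ // p.1 + p.2 = n}, subTmul (ℬ p.1.1) (ℬ p.1.2)) :
    LinearMap.ker (Coalgebra.counit (R := k) (A := H)) ≤
      ⨆ n : {n : ℕ // 1 ≤ n}, ℬ n.1 := by
  intro x hx
  have htop : x ∈ ℬ 0 ⊔ ⨆ n : {n : ℕ // 1 ≤ n}, ℬ n.1 := by
    have h := hint.submodule_iSup_eq_top
    have hle : (⨆ n, ℬ n) ≤ ℬ 0 ⊔ ⨆ n : {n : ℕ // 1 ≤ n}, ℬ n.1 := by
      refine iSup_le fun n => ?_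
      match n with
      | 0 => exact le_sup_left
      | (m+1) =>
          exact le_trans
            (le_iSup (fun n : {n : ℕ // 1 ≤ n} => ℬ n.1) ⟨m + 1, by omega⟩) le_sup_right
    exact hle (h ▸ Submodule.mem_top)
  rw [Submodule.mem_sup] at htop
  obtain ⟨y, hy, z, hz, rfl⟩ := htop
  have hεz : Coalgebra.counit (R := k) z = 0 := by
    have hSker : (⨆ n : {n : ℕ // 1 ≤ n}, ℬ n.1) ≤
        LinearMap.ker (Coalgebra.counit (R := k) (A := H)) :=
      iSup_le fun n => fun w hw =>
        LinearMap.mem_ker.mpr (key ℬ hint hconn hgraded n.1 n.2 w hw).1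
    exact LinearMap.mem_ker.mp (hSker hz)
  have hy' : y ∈ Submodule.span k {(1 : H)} := by rw [← hconn]; exact hy
  obtain ⟨c, hc⟩ := Submodule.mem_span_singleton.mp hy'
  have hεx : Coalgebra.counit (R := k) (y + z) = c := by
    rw [map_add, hεz, add_zero, ← hc, map_smul, Bialgebra.counit_one, smul_eq_mul, mul_one]
  have hc0 : c = 0 := by rw [← hεx]; exact LinearMap.mem_ker.mp hx
  have hy0 : y = 0 := by rw [← hc, hc0, zero_smul]
  rw [hy0, zero_add]; exact hz

end BirkhoffAux

/-- Algebraic Birkhoff decomposition: for a connected graded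
commutative Hopf algebra `H` over a field of characteristic zero and a commutative
algebra `K` split as `K = K₋ ⊕ K₊` by an idempotent projection `T` onto the
(non-unital) subalgebra `K₋` along the unital subalgebra `K₊`, and any algebra map
`φ : H → K`, the map `φ₋` defined recursively on the augmentation ideal by
`φ₋(X) = -T(φ(X) + Σ φ₋(X')φ(X''))` (and `φ₋(1) = 1`) is well defined by induction
on the degree, and `φ₊ := φ₋ * φ` satisfies
`φ₊(X) = φ(X) + φ₋(X) + Σ φ₋(X')φ(X'')` on the augmentation ideal. -/
theorem birkhoff_negative_part_exists
    {k H K : Type*} [Field k] [CharZero k] [CommRing H] [HopfAlgebra k H]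
    [CommRing K] [Algebra k K]
    (ℬ : ℕ → Submodule k H)
    (hinternal : DirectSum.IsInternal ℬ)
    (hconn : ℬ 0 = Submodule.span k {(1 : H)})
    (hgraded : ∀ n, ∀ x ∈ ℬ n,
      (Coalgebra.comul (R := k) x : H ⊗[k] H) ∈
        ⨆ p : {p : ℕ × ℕ // p.1 + p.2 = n}, subTmul (ℬ p.1.1) (ℬ p.1.2))
    (T : K →ₗ[k] K)
    (hT : T ∘ₗ T = T)
    (hKneg : ∀ a ∈ LinearMap.range T, ∀ b ∈ LinearMap.range T, a * b ∈ LinearMap.range T)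
    (hKpos : ∀ a ∈ LinearMap.ker T, ∀ b ∈ LinearMap.ker T, a * b ∈ LinearMap.ker T)
    (hT1 : T (1 : K) = 0)
    (φ : H →ₐ[k] K) :
    ∃ φm : H →ₗ[k] K,
      φm (1 : H) = 1 ∧
      (∀ x ∈ LinearMap.ker (Coalgebra.counit (R := k) (A := H)),
        φm x = -T (φ x + LinearMap.mul' k K
          ((TensorProduct.map φm φ.toLinearMap)
            (Coalgebra.comul (R := k) x - x ⊗ₜ[k] (1 : H) - (1 : H) ⊗ₜ[k] x)))) ∧
      (∀ x ∈ LinearMap.ker (Coalgebra.counit (R := k) (A := H)),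
        conv φm φ.toLinearMap x
          = φ x + φm x + LinearMap.mul' k K
              ((TensorProduct.map φm φ.toLinearMap)
                (Coalgebra.comul (R := k) x - x ⊗ₜ[k] (1 : H) - (1 : H) ⊗ₜ[k] x))) := by
  classical
  set φm := BirkhoffAux.phim ℬ hinternal T φ with hφm
  have h1 : φm (1 : H) = 1 := BirkhoffAux.phim_one ℬ hinternal hconn T φ
  refine ⟨φm, h1, ?_, ?_⟩
  · intro x hx
    have hxS := BirkhoffAux.ker_counit_le ℬ hinternal hconn hgraded hx
    set Φr : H →ₗ[k] K := -(T ∘ₗ (φ.toLinearMap + LinearMap.mul' k K ∘ₗ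
      TensorProduct.map φm φ.toLinearMap ∘ₗ BirkhoffAux.Dmap k H)) with hΦr
    have hS : (⨆ n : {n : ℕ // 1 ≤ n}, ℬ n.1) ≤ LinearMap.ker (φm - Φr) := by
      refine iSup_le fun n => fun w hw => LinearMap.mem_ker.mpr ?_
      rw [LinearMap.sub_apply, sub_eq_zero, hφm,
        BirkhoffAux.phim_rec ℬ hinternal hconn hgraded T φ n.1 n.2 w hw, hΦr]
      simp only [LinearMap.neg_apply, LinearMap.comp_apply, LinearMap.add_apply,
        AlgHom.toLinearMap_apply, hφm]
    have heq := LinearMap.mem_ker.mp (hS hxS)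
    rw [LinearMap.sub_apply, sub_eq_zero] at heq
    rw [heq, hΦr]
    simp only [LinearMap.neg_apply, LinearMap.comp_apply, LinearMap.add_apply,
      AlgHom.toLinearMap_apply, BirkhoffAux.Dmap_apply]
  · intro x _
    have hsplit : Coalgebra.comul (R := k) x =
        (Coalgebra.comul (R := k) x - x ⊗ₜ[k] (1 : H) - (1 : H) ⊗ₜ[k] x) +
          x ⊗ₜ[k] (1 : H) + (1 : H) ⊗ₜ[k] x := by abel
    have hconv : conv φm φ.toLinearMap x =
        LinearMap.mul' k K (TensorProduct.map φm φ.toLinearMap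
          (Coalgebra.comul (R := k) x)) := rfl
    rw [hconv]
    nth_rewrite 1 [hsplit]
    rw [map_add, map_add, map_add, map_add, TensorProduct.map_tmul,
      TensorProduct.map_tmul, LinearMap.mul'_apply, LinearMap.mul'_apply,
      h1, AlgHom.toLinearMap_apply, AlgHom.toLinearMap_apply, map_one,
      mul_one, one_mul]
    ring
end

section
/- With the setup of the Birkhoff decomposition (K = K₋ ⊕ K₊ with T the projection onto K₋ being a Rota–Baxter operator of weight -1, i.e. T(a)T(b) = T(T(a)b + aT(b) - ab)), the map φ₋ defined recursively by φ₋(X) = -T(φ(X) + Σ φ₋(X')φ(X'')) is an algebra homomorphism from H to k·1 + K₋. -/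
/-!
Write `Δx = x ⊗ 1 + R(x)` and `Ψ(a ⊗ b) = φ₋(a) φ(b)`. For `x` homogeneous of positive degree,
connectedness and the independence of the homogeneous components force `ε(x) = 0` and put the
first tensor factors of `R(x)` in degrees `< deg x`; the recursion then reads `φ₋(x) = -T(Ψ(R(x)))`.
Multiplicativity of `Δ` gives `R(xy) = (x ⊗ 1) R(y) + R(x) (y ⊗ 1) + R(x) R(y)`, and by induction on
`deg x + deg y` the map `Ψ` is multiplicative on each of these three products. With `A = Ψ(R(x))`,
`B = Ψ(R(y))` this gives `φ₋(xy) = -T(-T(A) B - A T(B) + A B)`, which the Rota–Baxter identity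
turns into `T(A) T(B) = φ₋(x) φ₋(y)`.
-/

open TensorProduct

section IsMulOn

variable {k A B : Type*} [CommSemiring k]

def IsMulOn [Semiring A] [Module k A] [Semiring B] [Module k B] (f : A →ₗ[k] B)
    (V W : Submodule k A) : Prop :=
  ∀ a ∈ V, ∀ c ∈ W, f (a * c) = f a * f c

theorem IsMulOn.symm [CommSemiring A] [Module k A] [CommSemiring B] [Module k B] {f : A →ₗ[k] B}
    {V W : Submodule k A} (h : IsMulOn f V W) : IsMulOn f W V :=
  fun c hc a ha => by rw [mul_comm, h a ha c hc, mul_comm]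

theorem isMulOn_iSup_left [Semiring A] [Module k A] [Semiring B] [Module k B] {ι : Sort*}
    {f : A →ₗ[k] B} {V : ι → Submodule k A} {W : Submodule k A} (h : ∀ i, IsMulOn f (V i) W) :
    IsMulOn f (⨆ i, V i) W := by
  intro a ha
  induction ha using Submodule.iSup_induction' with
  | mem i a ha => exact h i a ha
  | zero => simp
  | add a a' _ _ ha ha' => intro c hc; rw [add_mul, map_add, map_add, ha c hc, ha' c hc, add_mul]

theorem isMulOn_iSup_right [CommSemiring A] [Module k A] [CommSemiring B] [Module k B] {ι : Sort*}
    {f : A →ₗ[k] B} {V : Submodule k A} {W : ι → Submodule k A} (h : ∀ i, IsMulOn f V (W i)) :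
    IsMulOn f V (⨆ i, W i) :=
  (isMulOn_iSup_left fun i => (h i).symm).symm

theorem isMulOn_span_one_left [Semiring A] [Algebra k A] [Semiring B] [Algebra k B]
    {f : A →ₗ[k] B} (hf : f 1 = 1) (W : Submodule k A) :
    IsMulOn f (Submodule.span k {(1 : A)}) W := by
  intro a ha c _
  obtain ⟨r, rfl⟩ := Submodule.mem_span_singleton.mp ha
  rw [smul_mul_assoc, one_mul, map_smul, map_smul, hf, smul_mul_assoc, one_mul]

end IsMulOn

section SubTmul

variable {k H : Type*} [CommRing k] [AddCommGroup H] [Module k H]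

theorem tmul_mem_subTmul {V W : Submodule k H} {a b : H} (ha : a ∈ V) (hb : b ∈ W) :
    a ⊗ₜ[k] b ∈ subTmul V W :=
  ⟨⟨a, ha⟩ ⊗ₜ ⟨b, hb⟩, rfl⟩

@[elab_as_elim]
theorem subTmul_induction {V W : Submodule k H}
    {motive : (t : H ⊗[k] H) → t ∈ subTmul V W → Prop}
    (zero : motive 0 (zero_mem _))
    (tmul : ∀ a (ha : a ∈ V) b (hb : b ∈ W), motive (a ⊗ₜ b) (tmul_mem_subTmul ha hb))
    (add : ∀ s u hs hu, motive s hs → motive u hu → motive (s + u) (add_mem hs hu))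
    {t : H ⊗[k] H} (ht : t ∈ subTmul V W) : motive t ht := by
  obtain ⟨s, rfl⟩ := ht
  induction s using TensorProduct.induction_on with
  | zero => simpa using zero
  | tmul a b => exact tmul a a.2 b b.2
  | add s u hs hu => simpa using add _ _ _ _ hs hu

theorem subTmul_mono {V V' W W' : Submodule k H} (hV : V ≤ V') (hW : W ≤ W') :
    subTmul V W ≤ subTmul V' W' :=
  TensorProduct.range_mapIncl_mono hV hW

theorem exists_eq_tmul_of_mem_subTmul_span {V : Submodule k H} {u : H} {t : H ⊗[k] H}
    (ht : t ∈ subTmul V (Submodule.span k {u})) : ∃ w ∈ V, t = w ⊗ₜ u := by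
  induction ht using subTmul_induction with
  | zero => exact ⟨0, V.zero_mem, by simp⟩
  | tmul a ha b hb =>
    obtain ⟨c, rfl⟩ := Submodule.mem_span_singleton.mp hb
    exact ⟨c • a, V.smul_mem c ha, (TensorProduct.smul_tmul c a u).symm⟩
  | add s s' _ _ hs hs' =>
    obtain ⟨w, hw, rfl⟩ := hs
    obtain ⟨w', hw', rfl⟩ := hs'
    exact ⟨w + w', V.add_mem hw hw', (TensorProduct.add_tmul w w' u).symm⟩

theorem map_rid_lTensor_subTmul_le (f : H →ₗ[k] k) (V W : Submodule k H) :
    (subTmul V W).map ((TensorProduct.rid k H).toLinearMap ∘ₗ f.lTensor H) ≤ V := by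
  rw [Submodule.map_le_iff_le_comap]
  intro t ht
  induction ht using subTmul_induction with
  | zero => simp
  | tmul a ha b _ => simpa using V.smul_mem (f b) ha
  | add s s' _ _ hs hs' => exact Submodule.add_mem _ hs hs'

theorem map_lid_rTensor_subTmul_le (f : H →ₗ[k] k) (V W : Submodule k H) :
    (subTmul V W).map ((TensorProduct.lid k H).toLinearMap ∘ₗ f.rTensor H) ≤ W := by
  rw [Submodule.map_le_iff_le_comap]
  intro t ht
  induction ht using subTmul_induction with
  | zero => simp
  | tmul a _ b hb => simpa using W.smul_mem (f a) hb
  | add s s' _ _ hs hs' => exact Submodule.add_mem _ hs hs'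

end SubTmul

section TensorMul

variable {k H K : Type*} [CommRing k] [Ring H] [Algebra k H] [CommRing K] [Algebra k K]

noncomputable def tensorMul (f g : H →ₗ[k] K) : H ⊗[k] H →ₗ[k] K :=
  LinearMap.mul' k K ∘ₗ TensorProduct.map f g

@[simp]
theorem tensorMul_tmul (f g : H →ₗ[k] K) (a b : H) : tensorMul f g (a ⊗ₜ b) = f a * g b := by
  simp [tensorMul]

theorem tensorMul_mul {f : H →ₗ[k] K} {g : H →ₐ[k] K} {V W : Submodule k H}
    (hf : IsMulOn f V W) {X Y : H ⊗[k] H} (hX : X ∈ subTmul V ⊤) (hY : Y ∈ subTmul W ⊤) :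
    tensorMul f g.toLinearMap (X * Y) =
      tensorMul f g.toLinearMap X * tensorMul f g.toLinearMap Y := by
  induction hX using subTmul_induction with
  | zero => simp
  | add s s' _ _ hs hs' => rw [add_mul, map_add, map_add, hs, hs', add_mul]
  | tmul a ha b _ =>
    induction hY using subTmul_induction with
    | zero => simp
    | add s s' _ _ hs hs' => rw [mul_add, map_add, map_add, hs, hs', mul_add]
    | tmul c hc d _ =>
      simp only [Algebra.TensorProduct.tmul_mul_tmul, tensorMul_tmul, AlgHom.toLinearMap_apply,
        map_mul, hf a ha c hc]
      ring

end TensorMul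

section ConnectedGrading

theorem iSup_comp_le_iSup_ne {α ι κ : Type*} [CompleteLattice α] (f : ι → α) (d : κ → ι) {i : ι}
    (hd : ∀ j, d j ≠ i) : ⨆ j, f (d j) ≤ ⨆ (j) (_ : j ≠ i), f j :=
  iSup_le fun j => le_iSup₂_of_le (d j) (hd j) le_rfl

variable {k H : Type*} [CommRing k]

theorem iSup_subTmul_antidiagonal_le [AddCommGroup H] [Module k H] (ℬ : ℕ → Submodule k H)
    (p : ℕ) :
    ⨆ i : {i : ℕ × ℕ // i.1 + i.2 = p}, subTmul (ℬ i.1.1) (ℬ i.1.2) ≤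
      subTmul (ℬ p) (ℬ 0) ⊔ ⨆ a : Fin p, subTmul (ℬ a) (ℬ (p - a)) := by
  refine iSup_le ?_
  rintro ⟨⟨a, b⟩, hab⟩
  dsimp only at hab ⊢
  rcases Nat.lt_or_ge a p with ha | ha
  · obtain rfl : b = p - a := by omega
    exact le_sup_of_le_right (le_iSup_of_le (⟨a, ha⟩ : Fin p) le_rfl)
  · obtain ⟨rfl, rfl⟩ : a = p ∧ b = 0 := by omega
    exact le_sup_left

variable [Ring H] [Bialgebra k H] {ℬ : ℕ → Submodule k H} {p : ℕ} {x : H}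

theorem exists_comul_sub_tmul_one_mem (hconn : ℬ 0 = Submodule.span k {(1 : H)})
    (hcomul : Coalgebra.comul (R := k) x ∈
      ⨆ i : {i : ℕ × ℕ // i.1 + i.2 = p}, subTmul (ℬ i.1.1) (ℬ i.1.2)) :
    ∃ w ∈ ℬ p, Coalgebra.comul (R := k) x - w ⊗ₜ 1 ∈ ⨆ a : Fin p, subTmul (ℬ a) (ℬ (p - a)) := by
  obtain ⟨s, hs, r, hr, hsum⟩ := Submodule.mem_sup.mp (iSup_subTmul_antidiagonal_le ℬ p hcomul)
  rw [hconn] at hs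
  obtain ⟨w, hw, rfl⟩ := exists_eq_tmul_of_mem_subTmul_span hs
  exact ⟨w, hw, by rwa [← hsum, add_sub_cancel_left]⟩

theorem eq_of_comul_sub_tmul_one_mem (hind : iSupIndep ℬ) {w : H} (hx : x ∈ ℬ p) (hw : w ∈ ℬ p)
    (hR : Coalgebra.comul (R := k) x - w ⊗ₜ 1 ∈ ⨆ a : Fin p, subTmul (ℬ a) (ℬ (p - a))) :
    w = x := by
  set ρ := (TensorProduct.rid k H).toLinearMap ∘ₗ
    LinearMap.lTensor H (Coalgebra.counit (R := k) (A := H))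
  have hρ : ρ (Coalgebra.comul (R := k) x - w ⊗ₜ 1) = x - w := by
    simp [ρ, Bialgebra.counit_one]
  have hlow : x - w ∈ ⨆ a : Fin p, ℬ a := by
    have h := Submodule.mem_map_of_mem (f := ρ) hR
    rw [Submodule.map_iSup, hρ] at h
    exact iSup_mono (fun a => map_rid_lTensor_subTmul_le _ _ _) h
  have hzero : x - w = 0 :=
    Submodule.disjoint_def.mp (hind p) _ (sub_mem hx hw)
      (iSup_comp_le_iSup_ne ℬ Fin.val (fun a => a.isLt.ne) hlow)
  exact (sub_eq_zero.mp hzero).symm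

theorem counit_eq_zero_of_comul_sub_tmul_one_mem (hind : iSupIndep ℬ) (h1 : (1 : H) ∈ ℬ 0)
    (hp : p ≠ 0) (hx : x ∈ ℬ p)
    (hR : Coalgebra.comul (R := k) x - x ⊗ₜ 1 ∈ ⨆ a : Fin p, subTmul (ℬ a) (ℬ (p - a))) :
    Coalgebra.counit (R := k) x = 0 := by
  set ρ := (TensorProduct.lid k H).toLinearMap ∘ₗ
    LinearMap.rTensor H (Coalgebra.counit (R := k) (A := H))
  have hρ : ρ (Coalgebra.comul (R := k) x - x ⊗ₜ 1) = x - Coalgebra.counit (R := k) x • 1 := by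
    simp [ρ]
  have hhigh : x - Coalgebra.counit (R := k) x • 1 ∈ ⨆ a : Fin p, ℬ (p - a) := by
    have h := Submodule.mem_map_of_mem (f := ρ) hR
    rw [Submodule.map_iSup, hρ] at h
    exact iSup_mono (fun a => map_lid_rTensor_subTmul_le _ _ _) h
  have hpos : x - (x - Coalgebra.counit (R := k) x • 1) ∈ ⨆ (j) (_ : j ≠ 0), ℬ j :=
    sub_mem (Submodule.mem_iSup_of_mem p (Submodule.mem_iSup_of_mem hp hx))
      (iSup_comp_le_iSup_ne ℬ (fun a : Fin p => p - a) (fun a => by omega) hhigh)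
  rw [sub_sub_cancel] at hpos
  have hzero : Coalgebra.counit (R := k) x • (1 : H) = 0 :=
    Submodule.disjoint_def.mp (hind 0) _ (Submodule.smul_mem _ _ h1) hpos
  calc Coalgebra.counit (R := k) x
      = Coalgebra.counit (R := k) (Coalgebra.counit (R := k) x • (1 : H)) := by
        simp [Bialgebra.counit_one]
    _ = 0 := by rw [hzero, map_zero]

theorem counit_eq_zero_and_comul_sub_tmul_one_mem (hind : iSupIndep ℬ)
    (hconn : ℬ 0 = Submodule.span k {(1 : H)}) (hp : p ≠ 0) (hx : x ∈ ℬ p)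
    (hcomul : Coalgebra.comul (R := k) x ∈
      ⨆ i : {i : ℕ × ℕ // i.1 + i.2 = p}, subTmul (ℬ i.1.1) (ℬ i.1.2)) :
    Coalgebra.counit (R := k) x = 0 ∧
      Coalgebra.comul (R := k) x - x ⊗ₜ 1 ∈ subTmul (⨆ a : Fin p, ℬ a) ⊤ := by
  obtain ⟨w, hw, hR⟩ := exists_comul_sub_tmul_one_mem hconn hcomul
  obtain rfl := eq_of_comul_sub_tmul_one_mem hind hx hw hR
  have h1 : (1 : H) ∈ ℬ 0 := hconn ▸ Submodule.mem_span_singleton_self 1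
  exact ⟨counit_eq_zero_of_comul_sub_tmul_one_mem hind h1 hp hx hR,
    iSup_le (fun a => subTmul_mono (le_iSup_of_le a le_rfl) le_top) hR⟩

end ConnectedGrading

section BirkhoffRecursion

variable {k H K : Type*} [CommRing k] [CommRing H] [Bialgebra k H] [CommRing K] [Algebra k K]
  {ℬ : ℕ → Submodule k H} {T : K →ₗ[k] K} {φ : H →ₐ[k] K} {φm : H →ₗ[k] K}

theorem tensorMul_comul_sub_tmul_one (hφm1 : φm 1 = 1) (x : H) :
    tensorMul φm φ.toLinearMap (Coalgebra.comul (R := k) x - x ⊗ₜ 1) =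
      φ x + LinearMap.mul' k K (TensorProduct.map φm φ.toLinearMap
        (Coalgebra.comul (R := k) x - x ⊗ₜ[k] (1 : H) - (1 : H) ⊗ₜ[k] x)) := by
  simp [tensorMul, hφm1]

theorem isMulOn_of_isMulOn_lt (hind : iSupIndep ℬ) (hconn : ℬ 0 = Submodule.span k {(1 : H)})
    (hgraded : ∀ n, ∀ x ∈ ℬ n, Coalgebra.comul (R := k) x ∈
      ⨆ i : {i : ℕ × ℕ // i.1 + i.2 = n}, subTmul (ℬ i.1.1) (ℬ i.1.2))
    (hRB : ∀ a b : K, T a * T b = T (T a * b + a * T b - a * b))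
    (hrec : ∀ x : H, Coalgebra.counit (R := k) x = 0 →
      φm x = -T (tensorMul φm φ.toLinearMap (Coalgebra.comul (R := k) x - x ⊗ₜ 1)))
    {p q : ℕ} (hp : p ≠ 0) (hq : q ≠ 0)
    (IH : ∀ a c, a + c < p + q → IsMulOn φm (ℬ a) (ℬ c)) : IsMulOn φm (ℬ p) (ℬ q) := by
  intro x hx y hy
  obtain ⟨hεx, hRx⟩ :=
    counit_eq_zero_and_comul_sub_tmul_one_mem hind hconn hp hx (hgraded p x hx)
  obtain ⟨hεy, hRy⟩ :=
    counit_eq_zero_and_comul_sub_tmul_one_mem hind hconn hq hy (hgraded q y hy)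
  have hεxy : Coalgebra.counit (R := k) (x * y) = 0 := by
    rw [Bialgebra.counit_mul, hεx, zero_mul]
  have hsplit : Coalgebra.comul (R := k) (x * y) - (x * y) ⊗ₜ 1 =
      (x ⊗ₜ 1) * (Coalgebra.comul (R := k) y - y ⊗ₜ 1) +
      (Coalgebra.comul (R := k) x - x ⊗ₜ 1) * (y ⊗ₜ 1) +
      (Coalgebra.comul (R := k) x - x ⊗ₜ 1) * (Coalgebra.comul (R := k) y - y ⊗ₜ 1) := by
    have hprod : (x * y) ⊗ₜ[k] (1 : H) = (x ⊗ₜ 1) * (y ⊗ₜ 1) := by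
      rw [Algebra.TensorProduct.tmul_mul_tmul, mul_one]
    rw [Bialgebra.comul_mul, hprod]
    ring
  have hΨ : ∀ z : H, tensorMul φm φ.toLinearMap (z ⊗ₜ 1) = φm z := fun z => by simp
  have hleft : IsMulOn φm (ℬ p) (⨆ c : Fin q, ℬ c) :=
    isMulOn_iSup_right fun c => IH p c (by omega)
  have hright : IsMulOn φm (⨆ a : Fin p, ℬ a) (ℬ q) :=
    isMulOn_iSup_left fun a => IH a q (by omega)
  have hboth : IsMulOn φm (⨆ a : Fin p, ℬ a) (⨆ c : Fin q, ℬ c) :=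
    isMulOn_iSup_left fun a => isMulOn_iSup_right fun c => IH a c (by omega)
  set A := tensorMul φm φ.toLinearMap (Coalgebra.comul (R := k) x - x ⊗ₜ 1)
  set B := tensorMul φm φ.toLinearMap (Coalgebra.comul (R := k) y - y ⊗ₜ 1)
  calc φm (x * y) = -T (φm x * B + A * φm y + A * B) := by
        rw [hrec _ hεxy, hsplit, map_add (tensorMul _ _), map_add (tensorMul _ _),
          tensorMul_mul hleft (tmul_mem_subTmul hx trivial) hRy,
          tensorMul_mul hright hRx (tmul_mem_subTmul hy trivial), tensorMul_mul hboth hRx hRy,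
          hΨ, hΨ]
    _ = T (T A * B + A * T B - A * B) := by
        rw [hrec x hεx, hrec y hεy, ← map_neg]
        congr 1
        ring
    _ = φm x * φm y := by rw [← hRB, hrec x hεx, hrec y hεy, neg_mul_neg]

theorem isMulOn_homogeneous (hind : iSupIndep ℬ) (hconn : ℬ 0 = Submodule.span k {(1 : H)})
    (hgraded : ∀ n, ∀ x ∈ ℬ n, Coalgebra.comul (R := k) x ∈
      ⨆ i : {i : ℕ × ℕ // i.1 + i.2 = n}, subTmul (ℬ i.1.1) (ℬ i.1.2))
    (hRB : ∀ a b : K, T a * T b = T (T a * b + a * T b - a * b)) (hφm1 : φm 1 = 1)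
    (hrec : ∀ x : H, Coalgebra.counit (R := k) x = 0 →
      φm x = -T (tensorMul φm φ.toLinearMap (Coalgebra.comul (R := k) x - x ⊗ₜ 1)))
    (p q : ℕ) : IsMulOn φm (ℬ p) (ℬ q) := by
  induction hn : p + q using Nat.strong_induction_on generalizing p q with
  | _ n IH =>
  rcases eq_or_ne p 0 with rfl | hp
  · rw [hconn]
    exact isMulOn_span_one_left hφm1 _
  rcases eq_or_ne q 0 with rfl | hq
  · rw [hconn]
    exact (isMulOn_span_one_left hφm1 _).symm
  exact isMulOn_of_isMulOn_lt hind hconn hgraded hRB hrec hp hq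
    fun a c hac => IH _ (hn ▸ hac) a c rfl

end BirkhoffRecursion

theorem birkhoff_negative_part_is_character_general
    {k H K : Type*} [Field k] [CommRing H] [HopfAlgebra k H]
    [CommRing K] [Algebra k K]
    (ℬ : ℕ → Submodule k H)
    (hinternal : DirectSum.IsInternal ℬ)
    (hconn : ℬ 0 = Submodule.span k {(1 : H)})
    (hgraded : ∀ n, ∀ x ∈ ℬ n,
      (Coalgebra.comul (R := k) x : H ⊗[k] H) ∈
        ⨆ p : {p : ℕ × ℕ // p.1 + p.2 = n}, subTmul (ℬ p.1.1) (ℬ p.1.2))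
    (T : K →ₗ[k] K)
    (hRB : ∀ a b : K, T a * T b = T (T a * b + a * T b - a * b))
    (φ : H →ₐ[k] K)
    (φm : H →ₗ[k] K)
    (hφm1 : φm (1 : H) = 1)
    (hrec : ∀ x ∈ LinearMap.ker (Coalgebra.counit (R := k) (A := H)),
      φm x = -T (φ x + LinearMap.mul' k K
        ((TensorProduct.map φm φ.toLinearMap)
          (Coalgebra.comul (R := k) x - x ⊗ₜ[k] (1 : H) - (1 : H) ⊗ₜ[k] x)))) :
    (∀ x y : H, φm (x * y) = φm x * φm y) ∧
    (∀ x : H, φm x ∈ Submodule.span k {(1 : K)} ⊔ LinearMap.range T) := by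
  have hrec' : ∀ x : H, Coalgebra.counit (R := k) x = 0 →
      φm x = -T (tensorMul φm φ.toLinearMap (Coalgebra.comul (R := k) x - x ⊗ₜ 1)) :=
    fun x hx => by rw [tensorMul_comul_sub_tmul_one hφm1]; exact hrec x hx
  refine ⟨fun x y => ?_, fun x => ?_⟩
  · have hmul := isMulOn_iSup_left fun p => isMulOn_iSup_right fun q =>
      isMulOn_homogeneous hinternal.submodule_iSupIndep hconn hgraded hRB hφm1 hrec' p q
    rw [hinternal.submodule_iSup_eq_top] at hmul
    exact hmul x trivial y trivial
  · have hε : Coalgebra.counit (R := k) (x - Coalgebra.counit (R := k) x • 1) = 0 := by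
      simp [Bialgebra.counit_one]
    have hsplit : φm x = Coalgebra.counit (R := k) x • 1 +
        φm (x - Coalgebra.counit (R := k) x • 1) := by
      rw [map_sub, map_smul, hφm1, add_sub_cancel]
    rw [hsplit, hrec' _ hε]
    exact add_mem
      (Submodule.mem_sup_left (Submodule.smul_mem _ _ (Submodule.mem_span_singleton_self 1)))
      (Submodule.mem_sup_right (neg_mem (LinearMap.mem_range_self T _)))

/-- If the projection `T` onto `K₋` is a Rota–Baxter operator of
weight `-1` (i.e. `T(a)T(b) = T(T(a)b + aT(b) - ab)`), then the map `φ₋` defined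
recursively by `φ₋(X) = -T(φ(X) + Σ φ₋(X')φ(X''))` is an algebra homomorphism
from `H` to `k·1 + K₋`. -/
theorem birkhoff_negative_part_is_character
    {k H K : Type*} [Field k] [CommRing H] [HopfAlgebra k H]
    [CommRing K] [Algebra k K]
    (ℬ : ℕ → Submodule k H)
    (hinternal : DirectSum.IsInternal ℬ)
    (hconn : ℬ 0 = Submodule.span k {(1 : H)})
    (hgraded : ∀ n, ∀ x ∈ ℬ n,
      (Coalgebra.comul (R := k) x : H ⊗[k] H) ∈
        ⨆ p : {p : ℕ × ℕ // p.1 + p.2 = n}, subTmul (ℬ p.1.1) (ℬ p.1.2))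
    (T : K →ₗ[k] K)
    (hT : T ∘ₗ T = T)
    (hKneg : ∀ a ∈ LinearMap.range T, ∀ b ∈ LinearMap.range T, a * b ∈ LinearMap.range T)
    (hKpos : ∀ a ∈ LinearMap.ker T, ∀ b ∈ LinearMap.ker T, a * b ∈ LinearMap.ker T)
    (hT1 : T (1 : K) = 0)
    (hRB : ∀ a b : K, T a * T b = T (T a * b + a * T b - a * b))
    (φ : H →ₐ[k] K)
    (φm : H →ₗ[k] K)
    (hφm1 : φm (1 : H) = 1)
    (hrec : ∀ x ∈ LinearMap.ker (Coalgebra.counit (R := k) (A := H)),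
      φm x = -T (φ x + LinearMap.mul' k K
        ((TensorProduct.map φm φ.toLinearMap)
          (Coalgebra.comul (R := k) x - x ⊗ₜ[k] (1 : H) - (1 : H) ⊗ₜ[k] x)))) :
    (∀ x y : H, φm (x * y) = φm x * φm y) ∧
    (∀ x : H, φm x ∈ Submodule.span k {(1 : K)} ⊔ LinearMap.range T) :=
  birkhoff_negative_part_is_character_general ℬ hinternal hconn hgraded T hRB φ φm hφm1 hrec
end

section
/- Uniqueness of the algebraic Birkhoff decomposition: if φ = ψ₋^{-1} * ψ₊ = χ₋^{-1} * χ₊ are two factorizations of an algebra homomorphism φ : H → K with ψ₋, χ₋ algebra maps into k·1 + K₋ normalized by ε-augmentation (i.e. (ψ₋ - η∘ε)(H) ⊆ K₋) and ψ₊, χ₊ algebra maps into k·1 + K₊, then ψ₋ = χ₋ and ψ₊ = χ₊. -/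
open TensorProduct

/-!
Put `ρ = χ₋ ψ₋⁻¹` in the convolution ring, so that `ρ ψ₋ = χ₋` and `ρ ψ₊ = χ₊`. Suppose
`ρ - ε` vanishes below degree `n`. Since `ψ± - ε` kills `H₀ = k·1`, every term of
`(ρ - ε)(ψ± - ε)` vanishes in degree `n`, so there the two equations read
`ρ - ε = χ₋ - ψ₋ ∈ K₋` and `ρ - ε = χ₊ - ψ₊ ∈ k·1 + K₊`. These meet only in `0`, so by induction
on the degree `ρ = ε`, whence `ψ₋ = χ₋` and `ψ₊ = χ₊`.
-/

open WithConv

lemma toConv_conv {k H A : Type*} [CommRing k] [AddCommGroup H] [Module k H] [Coalgebra k H]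
    [Ring A] [Algebra k A] (f g : H →ₗ[k] A) :
    toConv (conv f g) = toConv f * toConv g :=
  rfl

section Graded

open Coalgebra

variable {k H A : Type*} [CommRing k] [Ring A] [Algebra k A]

section

variable [AddCommGroup H] [Module k H] {ℬ : ℕ → Submodule k H}

lemma convMul_apply_eq_zero_of_comul_mem [Coalgebra k H] {n : ℕ} {x : H}
    (hx : comul (R := k) x ∈ ⨆ p : {p : ℕ × ℕ // p.1 + p.2 = n}, subTmul (ℬ p.1.1) (ℬ p.1.2))
    {f g : WithConv (H →ₗ[k] A)} (hf : ∀ i < n, ∀ y ∈ ℬ i, f y = 0)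
    (hg : ∀ y ∈ ℬ 0, g y = 0) :
    (f * g) x = 0 := by
  suffices h : (⨆ p : {p : ℕ × ℕ // p.1 + p.2 = n}, subTmul (ℬ p.1.1) (ℬ p.1.2)) ≤
      LinearMap.ker (LinearMap.mul' k A ∘ₗ map f.ofConv g.ofConv) from h hx
  refine iSup_le fun ⟨(i, j), hij⟩ ↦
    LinearMap.range_le_ker_iff.2 (TensorProduct.ext' fun a b ↦ ?_)
  simp only [LinearMap.comp_apply, TensorProduct.mapIncl, map_tmul, LinearMap.mul'_apply,
    Submodule.subtype_apply, LinearMap.zero_apply]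
  rcases Nat.lt_or_ge i n with hi | hi
  · rw [hf i hi a a.2, zero_mul]
  · rw [hg b (by simpa [show j = 0 by omega] using b.2), mul_zero]

lemma eq_zero_of_forall_mem_graded (hℬ : ⨆ n, ℬ n = ⊤)
    {f : H →ₗ[k] A} (hf : ∀ n, ∀ y ∈ ℬ n, f y = 0) : f = 0 := by
  rw [← LinearMap.ker_eq_top, eq_top_iff, ← hℬ]
  exact iSup_le fun n y hy ↦ hf n y hy

end

variable [Ring H] [Bialgebra k H] {ℬ : ℕ → Submodule k H}

theorem eq_one_of_mul_eq_of_mul_eq (hℬ : ⨆ n, ℬ n = ⊤) (hconn : ℬ 0 = Submodule.span k {1})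
    (hgraded : ∀ n, ∀ x ∈ ℬ n, comul (R := k) x ∈
      ⨆ p : {p : ℕ × ℕ // p.1 + p.2 = n}, subTmul (ℬ p.1.1) (ℬ p.1.2))
    {M₁ M₂ : Submodule k A} (hM : Disjoint M₁ M₂) {ρ a a' b b' : WithConv (H →ₗ[k] A)}
    (ha : a 1 = 1) (hb : b 1 = 1) (hρa : ρ * a = a') (hρb : ρ * b = b')
    (ha' : ∀ x, (a' - a) x ∈ M₁) (hb' : ∀ x, (b' - b) x ∈ M₂) :
    ρ = 1 := by
  have hvanish₀ : ∀ c : WithConv (H →ₗ[k] A), c 1 = 1 → ∀ y ∈ ℬ 0, (c - 1) y = 0 := by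
    intro c hc y hy
    rw [hconn] at hy
    obtain ⟨r, rfl⟩ := Submodule.mem_span_singleton.1 hy
    simp [hc]
  have step : ∀ n, (∀ i < n, ∀ y ∈ ℬ i, (ρ - 1) y = 0) → ∀ c c', ρ * c = c' → c 1 = 1 →
      ∀ x ∈ ℬ n, (ρ - 1) x = (c' - c) x := by
    intro n ih c c' hc hc1 x hx
    have hsplit : c' - c = (ρ - 1) * (c - 1) + (ρ - 1) := by rw [← hc]; noncomm_ring
    rw [hsplit, ofConv_add, LinearMap.add_apply,
      convMul_apply_eq_zero_of_comul_mem (hgraded n x hx) ih (hvanish₀ c hc1), zero_add]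
  have hgr : ∀ n, ∀ x ∈ ℬ n, (ρ - 1) x = 0 := by
    intro n
    induction n using Nat.strong_induction_on with
    | _ n ih =>
      intro x hx
      refine Submodule.disjoint_def.1 hM _ ?_ ?_
      · rw [step n ih a a' hρa ha x hx]; exact ha' x
      · rw [step n ih b b' hρb hb x hx]; exact hb' x
  exact sub_eq_zero.1 (ofConv_injective (eq_zero_of_forall_mem_graded hℬ hgr))

end Graded

theorem birkhoff_decomposition_unique_general
    {k H K : Type*} [Field k] [CommRing H] [HopfAlgebra k H]
    [CommRing K] [Algebra k K]
    (ℬ : ℕ → Submodule k H)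
    (hinternal : DirectSum.IsInternal ℬ)
    (hconn : ℬ 0 = Submodule.span k {(1 : H)})
    (hgraded : ∀ n, ∀ x ∈ ℬ n,
      (Coalgebra.comul (R := k) x : H ⊗[k] H) ∈
        ⨆ p : {p : ℕ × ℕ // p.1 + p.2 = n}, subTmul (ℬ p.1.1) (ℬ p.1.2))
    (T : K →ₗ[k] K)
    (hT : T ∘ₗ T = T)
    (hT1 : T (1 : K) = 0)
    (φ ψm ψminv ψp χm χminv χp : H →ₗ[k] K)
    (hψm1 : ψm 1 = 1)
    (hψp1 : ψp 1 = 1)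
    -- normalization: ψ₋ - η∘ε and χ₋ - η∘ε take values in K₋ = range T
    (hψmval : ∀ x : H, ψm x - ((Algebra.linearMap k K) ∘ₗ Coalgebra.counit) x
        ∈ LinearMap.range T)
    (hχmval : ∀ x : H, χm x - ((Algebra.linearMap k K) ∘ₗ Coalgebra.counit) x
        ∈ LinearMap.range T)
    -- ψ₊, χ₊ take values in k·1 + K₊
    (hψpval : ∀ x : H, ψp x ∈ Submodule.span k {(1 : K)} ⊔ LinearMap.ker T)
    (hχpval : ∀ x : H, χp x ∈ Submodule.span k {(1 : K)} ⊔ LinearMap.ker T)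
    -- ψ₋⁻¹, χ₋⁻¹ are the convolution inverses of ψ₋, χ₋
    (hψinv : conv ψminv ψm = (Algebra.linearMap k K) ∘ₗ Coalgebra.counit ∧
             conv ψm ψminv = (Algebra.linearMap k K) ∘ₗ Coalgebra.counit)
    (hχinv : conv χminv χm = (Algebra.linearMap k K) ∘ₗ Coalgebra.counit ∧
             conv χm χminv = (Algebra.linearMap k K) ∘ₗ Coalgebra.counit)
    -- the two factorizations of φ
    (hfacψ : φ = conv ψminv ψp)
    (hfacχ : φ = conv χminv χp) :
    ψm = χm ∧ ψp = χp := by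
  have hKplus : Submodule.span k {(1 : K)} ⊔ LinearMap.ker T = LinearMap.ker T :=
    sup_eq_right.2 ((Submodule.span_singleton_le_iff_mem _ _).2 hT1)
  have hψ : toConv ψminv * toConv ψm = 1 := by
    rw [← toConv_conv, hψinv.1, LinearMap.convOne_def]
  have hχ : toConv χm * toConv χminv = 1 := by
    rw [← toConv_conv, hχinv.2, LinearMap.convOne_def]
  set ρ : WithConv (H →ₗ[k] K) := toConv χm * toConv ψminv
  have hρm : ρ * toConv ψm = toConv χm := by rw [mul_assoc, hψ, mul_one]
  have hρp : ρ * toConv ψp = toConv χp := by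
    rw [mul_assoc, ← toConv_conv ψminv, ← hfacψ, hfacχ, toConv_conv, ← mul_assoc, hχ, one_mul]
  have hρ : ρ = 1 :=
    eq_one_of_mul_eq_of_mul_eq hinternal.submodule_iSup_eq_top hconn hgraded
      (LinearMap.IsIdempotentElem.isCompl hT).disjoint hψm1 hψp1 hρm hρp
      (fun x ↦ by simpa using sub_mem (hχmval x) (hψmval x))
      (fun x ↦ hKplus ▸ sub_mem (hχpval x) (hψpval x))
  rw [hρ, one_mul] at hρm hρp
  exact ⟨congrArg ofConv hρm, congrArg ofConv hρp⟩

/-- Uniqueness of the algebraic Birkhoff decomposition: two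
factorizations `φ = ψ₋⁻¹ * ψ₊ = χ₋⁻¹ * χ₊` of an algebra map `φ : H → K`, with
`ψ₋, χ₋` algebra maps normalized so that `ψ₋ - η∘ε` takes values in `K₋`, and
`ψ₊, χ₊` algebra maps with values in `k·1 + K₊`, coincide: `ψ₋ = χ₋`, `ψ₊ = χ₊`. -/
theorem birkhoff_decomposition_unique
    {k H K : Type*} [Field k] [CommRing H] [HopfAlgebra k H]
    [CommRing K] [Algebra k K]
    (ℬ : ℕ → Submodule k H)
    (hinternal : DirectSum.IsInternal ℬ)
    (hconn : ℬ 0 = Submodule.span k {(1 : H)})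
    (hgraded : ∀ n, ∀ x ∈ ℬ n,
      (Coalgebra.comul (R := k) x : H ⊗[k] H) ∈
        ⨆ p : {p : ℕ × ℕ // p.1 + p.2 = n}, subTmul (ℬ p.1.1) (ℬ p.1.2))
    (T : K →ₗ[k] K)
    (hT : T ∘ₗ T = T)
    (hKneg : ∀ a ∈ LinearMap.range T, ∀ b ∈ LinearMap.range T, a * b ∈ LinearMap.range T)
    (hKpos : ∀ a ∈ LinearMap.ker T, ∀ b ∈ LinearMap.ker T, a * b ∈ LinearMap.ker T)
    (hT1 : T (1 : K) = 0)
    (φ ψm ψminv ψp χm χminv χp : H →ₗ[k] K)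
    -- all six maps are algebra homomorphisms
    (hφ : ∀ x y, φ (x * y) = φ x * φ y) (hφ1 : φ 1 = 1)
    (hψm : ∀ x y, ψm (x * y) = ψm x * ψm y) (hψm1 : ψm 1 = 1)
    (hψp : ∀ x y, ψp (x * y) = ψp x * ψp y) (hψp1 : ψp 1 = 1)
    (hχm : ∀ x y, χm (x * y) = χm x * χm y) (hχm1 : χm 1 = 1)
    (hχp : ∀ x y, χp (x * y) = χp x * χp y) (hχp1 : χp 1 = 1)
    -- normalization: ψ₋ - η∘ε and χ₋ - η∘ε take values in K₋ = range T
    (hψmval : ∀ x : H, ψm x - ((Algebra.linearMap k K) ∘ₗ Coalgebra.counit) x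
        ∈ LinearMap.range T)
    (hχmval : ∀ x : H, χm x - ((Algebra.linearMap k K) ∘ₗ Coalgebra.counit) x
        ∈ LinearMap.range T)
    -- ψ₊, χ₊ take values in k·1 + K₊
    (hψpval : ∀ x : H, ψp x ∈ Submodule.span k {(1 : K)} ⊔ LinearMap.ker T)
    (hχpval : ∀ x : H, χp x ∈ Submodule.span k {(1 : K)} ⊔ LinearMap.ker T)
    -- ψ₋⁻¹, χ₋⁻¹ are the convolution inverses of ψ₋, χ₋
    (hψinv : conv ψminv ψm = (Algebra.linearMap k K) ∘ₗ Coalgebra.counit ∧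
             conv ψm ψminv = (Algebra.linearMap k K) ∘ₗ Coalgebra.counit)
    (hχinv : conv χminv χm = (Algebra.linearMap k K) ∘ₗ Coalgebra.counit ∧
             conv χm χminv = (Algebra.linearMap k K) ∘ₗ Coalgebra.counit)
    -- the two factorizations of φ
    (hfacψ : φ = conv ψminv ψp)
    (hfacχ : φ = conv χminv χp) :
    ψm = χm ∧ ψp = χp :=
  birkhoff_decomposition_unique_general ℬ hinternal hconn hgraded T hT hT1 φ ψm ψminv ψp χm χminv χp
    hψm1 hψp1 hψmval hχmval hψpval hχpval hψinv hχinv hfacψ hfacχ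
end
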